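/- Let n ≥ 1, let d₁ ≥ d₂ ≥ ⋯ ≥ dₙ be integers with dᵢ + d_{n+1−i} = 0 for every 1 ≤ i ≤ n, and set ω(u) = diag(u^{d₁}, …, u^{dₙ}) for u ∈ kˣ. Let φ : k → SL(n,k) be a map such that every matrix entry of φ(t) is a polynomial function of t, φ(t+t') = φ(t)·φ(t') for all t,t' ∈ k, φ(t) is an upper triangular matrix for every t ∈ k, and ω(u)·φ(t)·ω(u)⁻¹ = φ(u²·t) for all t ∈ k and u ∈ kˣ. Then for all indices 1 ≤ i ≤ j ≤ n the (i,j) entry a_{i,j}(t) of φ(t) is, as a polynomial in t, either identically zero or of the form λ·t^{(dᵢ−d_j)/2} with λ ∈ k, λ ≠ 0; in particular dᵢ − d_j is even whenever a_{i,j} is not identically zero. -/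

import Mathlib

/-!
Conjugating by `ω(u)` scales the `(i, j)` entry by `u ^ (dᵢ - d_j)`, so the polynomial `P`
giving that entry satisfies `P(u² t) = u ^ (dᵢ - d_j) · P(t)`. Comparing coefficients, every
monomial `c tᵐ` of `P` with `c ≠ 0` has `u ^ (2m) = u ^ (dᵢ - d_j)` for all `u ≠ 0`, which over an
infinite field forces `2m = dᵢ - d_j`; hence `P` has at most one monomial.
-/

open Matrix Polynomial

theorem eq_of_forall_zpow_eq {K : Type*} [Field K] [Infinite K] {a b : ℤ}
    (h : ∀ x : K, x ≠ 0 → x ^ a = x ^ b) : a = b := by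
  by_contra hab
  set n := (a - b).natAbs
  have hn : n ≠ 0 := by omega
  have hroot : ∀ x : K, x ≠ 0 → x ^ n = 1 := by
    intro x hx
    have hsub : x ^ (a - b) = 1 := by rw [zpow_sub₀ hx, h x hx, div_self (zpow_ne_zero _ hx)]
    rcases Int.natAbs_eq (a - b) with hc | hc
    · rwa [hc, zpow_natCast] at hsub
    · rwa [hc, _root_.zpow_neg, inv_eq_one, zpow_natCast] at hsub
  have hX : (X ^ (n + 1) : K[X]) = X := Polynomial.funext fun x => by
    by_cases hx : x = 0
    · simp [hx]
    · simp [pow_succ, hroot x hx]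
  have := congrArg (coeff · 1) hX
  simp [coeff_X_pow, hn] at this

namespace Polynomial

variable {K : Type*} [Field K] [Infinite K] {P : K[X]} {r : ℕ} {e : ℤ}

theorem mul_eq_of_coeff_ne_zero_of_eval_pow_mul
    (hP : ∀ x : K, x ≠ 0 → ∀ t, P.eval (x ^ r * t) = x ^ e * P.eval t) {m : ℕ}
    (hm : P.coeff m ≠ 0) : (r * m : ℤ) = e := by
  refine eq_of_forall_zpow_eq (K := K) fun x hx => ?_
  have hcomp : P.comp (C (x ^ r) * X) = C (x ^ e) * P :=
    Polynomial.funext fun t => by simp [hP x hx]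
  have := congrArg (coeff · m) hcomp
  simp only [comp_C_mul_X_coeff, coeff_C_mul] at this
  rw [← mul_left_cancel₀ hm (this.trans (mul_comm _ _)), ← pow_mul]
  exact_mod_cast zpow_natCast x (r * m)

theorem eq_zero_or_eq_C_mul_X_pow_of_eval_pow_mul (hr : r ≠ 0)
    (hP : ∀ x : K, x ≠ 0 → ∀ t, P.eval (x ^ r * t) = x ^ e * P.eval t) :
    P = 0 ∨ ∃ (c : K) (δ : ℕ), c ≠ 0 ∧ P = C c * X ^ δ ∧ e = r * δ := by
  rcases eq_or_ne P 0 with hP0 | hP0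
  · exact Or.inl hP0
  have hsupp : P.support.card = 1 := by
    refine le_antisymm (Finset.card_le_one.2 fun a ha b hb => ?_)
      (Finset.card_pos.2 (nonempty_support_iff.2 hP0))
    have hab : (r * a : ℤ) = r * b := by
      rw [mul_eq_of_coeff_ne_zero_of_eval_pow_mul hP (mem_support_iff.1 ha),
        mul_eq_of_coeff_ne_zero_of_eval_pow_mul hP (mem_support_iff.1 hb)]
    exact_mod_cast mul_left_cancel₀ (by exact_mod_cast hr) hab
  obtain ⟨δ, c, hc, rfl⟩ := card_support_eq_one.1 hsupp
  refine Or.inr ⟨c, δ, hc, rfl, (mul_eq_of_coeff_ne_zero_of_eval_pow_mul hP ?_).symm⟩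
  simpa using hc

end Polynomial

theorem Matrix.diagonal_mul_mul_inv_diagonal_apply {ι K : Type*} [Fintype ι] [DecidableEq ι]
    [Field K] {w : ι → K} (hw : ∀ i, w i ≠ 0) (A : Matrix ι ι K) (i j : ι) :
    (diagonal w * A * (diagonal w)⁻¹) i j = w i * A i j / w j := by
  have hinv : (diagonal w)⁻¹ = diagonal fun i => (w i)⁻¹ :=
    inv_eq_right_inv (by simp [diagonal_mul_diagonal, hw])
  rw [hinv, mul_diagonal, diagonal_mul, div_eq_mul_inv]

theorem stmt3 {k : Type*} [Field k] [IsAlgClosed k]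
    {n : ℕ} (d : Fin n → ℤ)
    (φ : k → SpecialLinearGroup (Fin n) k)
    (hpoly : ∀ i j : Fin n, ∃ P : Polynomial k, ∀ t : k, (φ t).1 i j = P.eval t)
    (hconj : ∀ (t : k) (u : kˣ),
      Matrix.diagonal (fun i => (u : k) ^ d i) * (φ t).1 *
          (Matrix.diagonal fun i => (u : k) ^ d i)⁻¹ =
        (φ ((u : k) ^ 2 * t)).1) :
    ∀ i j : Fin n, i ≤ j →
      (∀ t : k, (φ t).1 i j = 0) ∨
        ∃ (lam : k) (δ : ℕ), lam ≠ 0 ∧ (∀ t : k, (φ t).1 i j = lam * t ^ δ) ∧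
          d i - d j = 2 * (δ : ℤ) := by
  intro i j _
  obtain ⟨P, hP⟩ := hpoly i j
  have hscale : ∀ x : k, x ≠ 0 → ∀ t, P.eval (x ^ 2 * t) = x ^ (d i - d j) * P.eval t := by
    intro x hx t
    have hentry := congrFun (congrFun (hconj t (Units.mk0 x hx)) i) j
    simp only [Units.val_mk0] at hentry
    rw [diagonal_mul_mul_inv_diagonal_apply (fun _ => zpow_ne_zero _ hx), hP, hP] at hentry
    rw [← hentry, zpow_sub₀ hx]
    ring
  rcases eq_zero_or_eq_C_mul_X_pow_of_eval_pow_mul two_ne_zero hscale with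
    rfl | ⟨c, δ, hc, rfl, he⟩
  · exact Or.inl fun t => by simp [hP]
  · exact Or.inr ⟨c, δ, hc, fun t => by simp [hP], by exact_mod_cast he⟩
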